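/- arXiv:2208.06039 — 5 statements merged into one kernel-verified Lean document; each statement's English description precedes it below -/
import Mathlib

section
/- Under informative sampling with inclusion probability P(δ=1 | X,Y,W) = W⁻¹, the conditional sampling probability satisfies π(x,y) := P(δ=1 | X=x, Y=y) = 1 / E[W | X=x, Y=y, δ=1]; that is, the reciprocal of the conditional expectation of the weight given the sampled data equals the conditional inclusion probability. -/
/-!
Since `W` is `σ(X, Y, W)`-measurable, it can be pulled out of the conditional expectation:
`E[δ W | X, Y, W] = W · W⁻¹ = 1`. By the tower property `E[δ W | X, Y] = 1` as well, so
`E[W | X, Y, δ = 1] = E[δ W | X, Y] / π = 1 / π`.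
-/

open MeasureTheory

section

variable {Ω : Type*} {m m₀ : MeasurableSpace Ω} {μ : Measure Ω}

lemma integrable_of_integrable_mul_of_one_le_norm {f W : Ω → ℝ} (hfW : Integrable (f * W) μ)
    (hWm : AEMeasurable W μ) (hW : ∀ᵐ ω ∂μ, 1 ≤ ‖W ω‖) : Integrable f μ := by
  have hf_eq : f =ᵐ[μ] (f * W) * W⁻¹ := by
    filter_upwards [hW] with ω hω
    have hW0 : W ω ≠ 0 := norm_pos_iff.mp (zero_lt_one.trans_le hω)
    simp [mul_inv_cancel_right₀ hW0]
  refine hfW.mono ((hfW.aestronglyMeasurable.mul hWm.inv.aestronglyMeasurable).congr hf_eq.symm) ?_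
  filter_upwards [hW] with ω hω
  rw [Pi.mul_apply, norm_mul]
  exact le_mul_of_one_le_right (norm_nonneg _) hω

lemma condExp_mul_eq_one_of_condExp_eq_inv {δ W : Ω → ℝ} (hWm : StronglyMeasurable[m] W)
    (hW : ∀ᵐ ω ∂μ, W ω ≠ 0) (hδ : Integrable δ μ) (hδW : Integrable (δ * W) μ)
    (hcond : μ[δ | m] =ᵐ[μ] W⁻¹) : μ[δ * W | m] =ᵐ[μ] 1 := by
  rw [mul_comm] at hδW ⊢
  filter_upwards [condExp_mul_of_stronglyMeasurable_left hWm hδW hδ, hcond, hW]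
    with ω hpull hcondω hWω
  rw [hpull, Pi.mul_apply, hcondω, Pi.inv_apply, mul_inv_cancel₀ hWω, Pi.one_apply]

lemma condExp_eq_const_of_le {E : Type*} [NormedAddCommGroup E] [NormedSpace ℝ E] [CompleteSpace E]
    {m' : MeasurableSpace Ω} [IsFiniteMeasure μ] {f : Ω → E} {c : E}
    (hm' : m' ≤ m) (hm : m ≤ m₀) (hf : μ[f | m] =ᵐ[μ] fun _ => c) :
    μ[f | m'] =ᵐ[μ] fun _ => c :=
  calc μ[f | m'] =ᵐ[μ] μ[μ[f | m] | m'] := (condExp_condExp_of_le hm' hm).symm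
    _ =ᵐ[μ] μ[fun _ => c | m'] := condExp_congr_ae hf
    _ = fun _ => c := condExp_const (hm'.trans hm) c

end

theorem pi_eq_inv_sampled_weight_mean_general
    {Ω : Type*} [m0 : MeasurableSpace Ω] (μ : Measure Ω) [IsProbabilityMeasure μ]
    (X Y W δ : Ω → ℝ)
    (hX : Measurable X) (hY : Measurable Y) (hWm : Measurable W)
    (hW : ∀ᵐ ω ∂μ, 1 < W ω)
    (hcond : μ[δ | MeasurableSpace.comap (fun ω => (X ω, Y ω, W ω)) inferInstance]
      =ᵐ[μ] fun ω => (W ω)⁻¹)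
    (hint : Integrable (fun ω => δ ω * W ω) μ) :
    ∀ᵐ ω ∂μ,
      (μ[δ | MeasurableSpace.comap (fun ω => (X ω, Y ω)) inferInstance]) ω
        = ((μ[fun ω => δ ω * W ω | MeasurableSpace.comap (fun ω => (X ω, Y ω)) inferInstance]) ω
            / (μ[δ | MeasurableSpace.comap (fun ω => (X ω, Y ω)) inferInstance]) ω)⁻¹ := by
  set φ : Ω → ℝ × ℝ × ℝ := fun ω => (X ω, Y ω, W ω)
  have hφ : Measurable[MeasurableSpace.comap φ inferInstance] φ := comap_measurable φ
  have hφ_le : MeasurableSpace.comap φ inferInstance ≤ m0 := (hX.prodMk (hY.prodMk hWm)).comap_le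
  have hXY_le_φ : MeasurableSpace.comap (fun ω => (X ω, Y ω)) inferInstance
      ≤ MeasurableSpace.comap φ inferInstance :=
    (measurable_fst.prodMk (measurable_fst.comp measurable_snd)).comp hφ |>.comap_le
  have hδW_XYW : μ[fun ω => δ ω * W ω | MeasurableSpace.comap φ inferInstance] =ᵐ[μ] fun _ => 1 :=
    condExp_mul_eq_one_of_condExp_eq_inv
      ((measurable_snd.comp measurable_snd).comp hφ).stronglyMeasurable
      (hW.mono fun ω hω => by positivity) (integrable_of_integrable_mul_of_one_le_norm hint
        hWm.aemeasurable (hW.mono fun ω hω => hω.le.trans (Real.le_norm_self _))) hint hcond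
  filter_upwards [condExp_eq_const_of_le hXY_le_φ hφ_le hδW_XYW] with ω hδW_XY
  rw [hδW_XY, one_div, inv_inv]

/-- Under informative sampling with `P(δ=1 | X,Y,W) = W⁻¹`, the conditional inclusion
probability `π(x,y) = P(δ=1 | X,Y)` equals the reciprocal of the conditional expectation
of the weight given the sampled data, `E[W | X,Y,δ=1] = E[δW | X,Y] / E[δ | X,Y]`. -/
theorem pi_eq_inv_sampled_weight_mean
    {Ω : Type*} [m0 : MeasurableSpace Ω] (μ : Measure Ω) [IsProbabilityMeasure μ]
    (X Y W δ : Ω → ℝ)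
    (hX : Measurable X) (hY : Measurable Y) (hWm : Measurable W)
    (hδ01 : ∀ ω, δ ω = 0 ∨ δ ω = 1)
    (hW : ∀ᵐ ω ∂μ, 1 < W ω)
    (hcond : μ[δ | MeasurableSpace.comap (fun ω => (X ω, Y ω, W ω)) inferInstance]
      =ᵐ[μ] fun ω => (W ω)⁻¹)
    (hint : Integrable (fun ω => δ ω * W ω) μ)
    (hpos : ∀ᵐ ω ∂μ,
      0 < (μ[δ | MeasurableSpace.comap (fun ω => (X ω, Y ω)) inferInstance]) ω) :
    ∀ᵐ ω ∂μ,
      (μ[δ | MeasurableSpace.comap (fun ω => (X ω, Y ω)) inferInstance]) ω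
        = ((μ[fun ω => δ ω * W ω | MeasurableSpace.comap (fun ω => (X ω, Y ω)) inferInstance]) ω
            / (μ[δ | MeasurableSpace.comap (fun ω => (X ω, Y ω)) inferInstance]) ω)⁻¹ :=
  pi_eq_inv_sampled_weight_mean_general (m0 := m0) μ X Y W δ hX hY hWm hW hcond hint
end

section
/- Let W > 1 a.s. with E[W | X] < ∞, and let ε be a random variable with E[ε | X] = 0, E[W ε² | X] > 0 a.s., and E[W ε² | X] < ∞. Then almost surely (E[Wε | X])² / E[Wε² | X] ≤ E[W−1 | X], with strict inequality whenever E[W−1 | X] > 0 and P(ε ≠ 0 | X) > 0; consequently E[W−1 | X] − (E[Wε | X])²/E[Wε² | X] ≥ 0. -/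
/-!
Conditional Cauchy–Schwarz with the nonnegative weight `W - 1` gives
`E[(W-1)ε | X]² ≤ E[W-1 | X] · E[(W-1)ε² | X]`. Since `E[ε | X] = 0`, the left side is
`E[Wε | X]²`, and the right side is `E[W-1 | X] · E[Wε² | X]` minus the slack
`E[W-1 | X] · E[ε² | X]`. The slack is positive where `P(ε ≠ 0 | X) > 0`: a nonnegative
function vanishes a.e. on every `X`-measurable set on which its conditional expectation vanishes.
-/

open MeasureTheory

theorem discrim_le_zero_of_forall_rat {a b c : ℝ} (h : ∀ q : ℚ, 0 ≤ a * (q * q) + b * q + c) :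
    discrim a b c ≤ 0 :=
  discrim_le_zero fun x =>
    Rat.denseRange_cast.induction_on (p := fun x : ℝ => 0 ≤ a * (x * x) + b * x + c) x
      (isClosed_le continuous_const (by fun_prop)) h

theorem integrable_of_integrable_mul_of_one_le {Ω : Type*} {m0 : MeasurableSpace Ω}
    {μ : Measure Ω} {w f : Ω → ℝ} (hwm : AEStronglyMeasurable w μ) (hw : ∀ᵐ ω ∂μ, 1 ≤ w ω)
    (hwf : Integrable (fun ω => w ω * f ω) μ) : Integrable f μ := by
  have hfm : AEStronglyMeasurable f μ := by
    refine (hwf.aemeasurable.div hwm.aemeasurable).aestronglyMeasurable.congr ?_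
    filter_upwards [hw] with ω h
    exact mul_div_cancel_left₀ _ (by positivity)
  refine hwf.mono hfm ?_
  filter_upwards [hw] with ω h
  rw [norm_mul]
  exact le_mul_of_one_le_left (norm_nonneg _) (h.trans (Real.le_norm_self _))

theorem integrable_ite_ne_zero {Ω : Type*} {m0 : MeasurableSpace Ω} {μ : Measure Ω}
    [IsFiniteMeasure μ] {f : Ω → ℝ} (hf : AEMeasurable f μ) :
    Integrable (fun ω => if f ω ≠ 0 then (1 : ℝ) else 0) μ := by
  refine .of_bound (((Measurable.ite (p := fun x : ℝ => x ≠ 0) (measurableSet_singleton 0).compl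
    measurable_const measurable_const).comp_aemeasurable hf).aestronglyMeasurable) 1 ?_
  filter_upwards with ω
  split_ifs <;> simp

section CondExp

variable {Ω : Type*} {m m0 : MeasurableSpace Ω} {μ : Measure Ω}

theorem condExp_mul_sq_le_mul {w f : Ω → ℝ} (hw : 0 ≤ᵐ[μ] w) (hwi : Integrable w μ)
    (hwf : Integrable (fun ω => w ω * f ω) μ) (hwf2 : Integrable (fun ω => w ω * f ω ^ 2) μ) :
    ∀ᵐ ω ∂μ, μ[fun ω => w ω * f ω | m] ω ^ 2
      ≤ μ[w | m] ω * μ[fun ω => w ω * f ω ^ 2 | m] ω := by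
  -- `E[w (q + f)² | m] ≥ 0` for the countably many rational `q` at once.
  have hquad : ∀ q : ℚ, ∀ᵐ ω ∂μ, 0 ≤ μ[w | m] ω * (q * q)
      + 2 * μ[fun ω => w ω * f ω | m] ω * q + μ[fun ω => w ω * f ω ^ 2 | m] ω := by
    intro q
    have hexpand : (fun ω => w ω * (q + f ω) ^ 2) = ((q * q : ℝ) • w
        + (2 * q : ℝ) • fun ω => w ω * f ω) + fun ω => w ω * f ω ^ 2 := by
      ext ω
      simp only [Pi.add_apply, Pi.smul_apply, smul_eq_mul]
      ring
    have hnonneg : 0 ≤ᵐ[μ] μ[fun ω => w ω * (q + f ω) ^ 2 | m] :=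
      condExp_nonneg (by filter_upwards [hw] with ω h using mul_nonneg h (sq_nonneg _))
    rw [hexpand] at hnonneg
    filter_upwards [hnonneg,
      condExp_add ((hwi.smul (q * q : ℝ)).add (hwf.smul (2 * q : ℝ))) hwf2 m,
      condExp_add (hwi.smul (q * q : ℝ)) (hwf.smul (2 * q : ℝ)) m, condExp_smul (q * q : ℝ) w m,
      condExp_smul (2 * q : ℝ) (fun ω => w ω * f ω) m] with ω h h₁ h₂ h₃ h₄
    simp only [h₁, Pi.add_apply, h₂, h₃, h₄, Pi.smul_apply, smul_eq_mul, Pi.zero_apply] at h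
    linarith
  filter_upwards [ae_all_iff.2 hquad] with ω h
  have := discrim_le_zero_of_forall_rat h
  rw [discrim] at this
  nlinarith

theorem condExp_ae_eq_restrict_zero_iff (hm : m ≤ m0) [SigmaFinite (μ.trim hm)] {f : Ω → ℝ}
    (hf : 0 ≤ᵐ[μ] f) (hfi : Integrable f μ) {s : Set Ω} (hs : MeasurableSet[m] s) :
    μ[f | m] =ᵐ[μ.restrict s] 0 ↔ f =ᵐ[μ.restrict s] 0 := by
  rw [← integral_eq_zero_iff_of_nonneg_ae (ae_restrict_of_ae hf) hfi.restrict,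
    ← integral_eq_zero_iff_of_nonneg_ae (ae_restrict_of_ae (condExp_nonneg hf))
      integrable_condExp.restrict, setIntegral_condExp hm hfi hs]

theorem condExp_pos_of_condExp_pos (hm : m ≤ m0) [SigmaFinite (μ.trim hm)] {f g : Ω → ℝ}
    (hf : 0 ≤ᵐ[μ] f) (hfi : Integrable f μ) (hg : 0 ≤ᵐ[μ] g) (hgi : Integrable g μ)
    (hgf : ∀ᵐ ω ∂μ, f ω = 0 → g ω = 0) :
    ∀ᵐ ω ∂μ, 0 < μ[g | m] ω → 0 < μ[f | m] ω := by
  set s := μ[f | m] ⁻¹' Set.Iic 0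
  have hs : MeasurableSet[m] s := stronglyMeasurable_condExp.measurable measurableSet_Iic
  have hfs : μ[f | m] =ᵐ[μ.restrict s] 0 := by
    rw [Filter.EventuallyEq, ae_restrict_iff' (hm _ hs)]
    filter_upwards [condExp_nonneg (m := m) hf] with ω h hω using le_antisymm hω h
  have hgs : g =ᵐ[μ.restrict s] 0 := by
    filter_upwards [(condExp_ae_eq_restrict_zero_iff hm hf hfi hs).1 hfs,
      ae_restrict_of_ae hgf] with ω h₁ h₂ using h₂ h₁
  have hcondg :=
    (ae_restrict_iff' (hm _ hs)).1 ((condExp_ae_eq_restrict_zero_iff hm hg hgi hs).2 hgs)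
  filter_upwards [hcondg] with ω h hpos
  by_contra hle
  exact hpos.ne' (h (not_lt.1 hle))

end CondExp

/-- Conditional Cauchy–Schwarz bound: with `W > 1` a.s. and `E[ε | X] = 0`,
`(E[Wε | X])² / E[Wε² | X] ≤ E[W−1 | X]` a.s., strictly whenever `E[W−1 | X] > 0`
and `P(ε ≠ 0 | X) > 0`; consequently `E[W−1 | X] − (E[Wε | X])²/E[Wε² | X] ≥ 0`. -/
theorem conditional_cauchy_schwarz_weight_bound
    {Ω : Type*} [m0 : MeasurableSpace Ω] (μ : Measure Ω) [IsProbabilityMeasure μ]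
    (m : MeasurableSpace Ω) (hm : m ≤ m0)
    (W ε : Ω → ℝ)
    (hW : ∀ᵐ ω ∂μ, 1 < W ω)
    (hWint : Integrable W μ)
    (hεcond : μ[ε | m] =ᵐ[μ] 0)
    (hWε : Integrable (fun ω => W ω * ε ω) μ)
    (hWε2 : Integrable (fun ω => W ω * ε ω ^ 2) μ)
    (hpos : ∀ᵐ ω ∂μ, 0 < (μ[fun ω => W ω * ε ω ^ 2 | m]) ω) :
    ∀ᵐ ω ∂μ,
      ((μ[fun ω => W ω * ε ω | m]) ω) ^ 2 / (μ[fun ω => W ω * ε ω ^ 2 | m]) ω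
          ≤ (μ[fun ω => W ω - 1 | m]) ω
      ∧ ((0 < (μ[fun ω => W ω - 1 | m]) ω
            ∧ 0 < (μ[fun ω => if ε ω ≠ 0 then (1 : ℝ) else 0 | m]) ω) →
          ((μ[fun ω => W ω * ε ω | m]) ω) ^ 2 / (μ[fun ω => W ω * ε ω ^ 2 | m]) ω
            < (μ[fun ω => W ω - 1 | m]) ω)
      ∧ 0 ≤ (μ[fun ω => W ω - 1 | m]) ω
          - ((μ[fun ω => W ω * ε ω | m]) ω) ^ 2 / (μ[fun ω => W ω * ε ω ^ 2 | m]) ω := by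
  have hW1 : ∀ᵐ ω ∂μ, 1 ≤ W ω := hW.mono fun _ h => h.le
  have hε := integrable_of_integrable_mul_of_one_le hWint.aestronglyMeasurable hW1 hWε
  have hε2 := integrable_of_integrable_mul_of_one_le (w := W) (f := fun ω => ε ω ^ 2)
    hWint.aestronglyMeasurable hW1 hWε2
  have hV : 0 ≤ᵐ[μ] fun ω => W ω - 1 := by
    filter_upwards [hW1] with ω h using sub_nonneg.2 h
  have hVε : (fun ω => (W ω - 1) * ε ω) = (fun ω => W ω * ε ω) - ε := by
    ext; simp only [Pi.sub_apply]; ring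
  have hVε2 : (fun ω => (W ω - 1) * ε ω ^ 2) = (fun ω => W ω * ε ω ^ 2) - fun ω => ε ω ^ 2 := by
    ext; simp only [Pi.sub_apply]; ring
  have hCS := condExp_mul_sq_le_mul (m := m) hV (hWint.sub (integrable_const 1))
    (hVε ▸ hWε.sub hε) (hVε2 ▸ hWε2.sub hε2)
  have hB : μ[fun ω => (W ω - 1) * ε ω | m] =ᵐ[μ] μ[fun ω => W ω * ε ω | m] := by
    rw [hVε]
    filter_upwards [condExp_sub hWε hε m, hεcond] with ω h₁ h₂
    simp [h₁, h₂]
  have hC := condExp_sub hWε2 hε2 m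
  rw [← hVε2] at hC
  have hstrict := condExp_pos_of_condExp_pos hm (f := fun ω => ε ω ^ 2)
    (Filter.Eventually.of_forall fun ω => sq_nonneg _) hε2
    (Filter.Eventually.of_forall fun ω => by positivity)
    (integrable_ite_ne_zero hε.aemeasurable)
    (Filter.Eventually.of_forall fun ω h => by simp_all)
  filter_upwards [hpos, hCS, hB, hC, hstrict, condExp_nonneg (m := m) hV,
    condExp_nonneg (m := m) (Filter.Eventually.of_forall fun ω => sq_nonneg (ε ω))]
    with ω hD hCS hB hC hstrict hA hE
  simp only [hB, hC, Pi.sub_apply] at hCS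
  set A := μ[fun ω => W ω - 1 | m] ω
  set D := μ[fun ω => W ω * ε ω ^ 2 | m] ω
  have hle : μ[fun ω => W ω * ε ω | m] ω ^ 2 / D ≤ A :=
    (div_le_iff₀ hD).2 (by nlinarith [mul_nonneg hA hE])
  refine ⟨hle, fun ⟨hApos, hG⟩ => (div_lt_iff₀ hD).2 ?_, sub_nonneg.2 hle⟩
  nlinarith [mul_pos hApos (hstrict hG)]
end

section
/- With π̄(x,y) = 1/E[W|x,y] and C*(x) = E[π̄S|x]/(E[π̄|x]−1), the function D*(x,y) = π̄·{S(x,y) − E[π̄S|x]/E[π̄|x] + (1/π̄ − 1/E[π̄|x])·C*(x)} satisfies E[D*(x,Y)|x] = 0. -/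
/-!
Since `π̄ > 0` a.e., `D* = π̄ (S - E[π̄S]/E[π̄]) + (1 - π̄/E[π̄]) C*` a.e. The first summand
integrates to `E[π̄S] - E[π̄S] = 0` and the second to `(1 - 1) C* = 0`.
-/

open MeasureTheory

section

variable {Θ : Type*} [MeasurableSpace Θ] {ν : Measure Θ} {π S : Θ → ℝ}

lemma integrable_mul_sub_const (hπ : Integrable π ν) (hπS : Integrable (fun y => π y * S y) ν)
    (a : ℝ) : Integrable (fun y => π y * (S y - a)) ν := by
  simp_rw [mul_sub]
  exact hπS.sub (hπ.mul_const a)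

lemma integral_mul_sub_weighted_mean (hπ : Integrable π ν)
    (hπS : Integrable (fun y => π y * S y) ν) (hm : ∫ y, π y ∂ν ≠ 0) :
    ∫ y, π y * (S y - (∫ t, π t * S t ∂ν) / ∫ t, π t ∂ν) ∂ν = 0 := by
  simp_rw [mul_sub]
  rw [integral_sub hπS (hπ.mul_const _), integral_mul_const, mul_div_cancel₀ _ hm, sub_self]

lemma mul_inv_sub_inv_mul_ae_eq (hπ0 : ∀ᵐ y ∂ν, π y ≠ 0) (m c : ℝ) :
    (fun y => π y * (((π y)⁻¹ - m⁻¹) * c)) =ᵐ[ν] fun y => (1 - π y * m⁻¹) * c := by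
  filter_upwards [hπ0] with y hy
  rw [← mul_assoc, mul_sub, mul_inv_cancel₀ hy]

variable [IsProbabilityMeasure ν]

lemma integrable_mul_inv_sub_inv_mul (hπ0 : ∀ᵐ y ∂ν, π y ≠ 0) (hπ : Integrable π ν)
    (m c : ℝ) : Integrable (fun y => π y * (((π y)⁻¹ - m⁻¹) * c)) ν :=
  (((integrable_const 1).sub (hπ.mul_const m⁻¹)).mul_const c).congr
    (mul_inv_sub_inv_mul_ae_eq hπ0 m c).symm

lemma integral_mul_inv_sub_inv_integral_mul (hπ0 : ∀ᵐ y ∂ν, π y ≠ 0) (hπ : Integrable π ν)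
    (hm : ∫ y, π y ∂ν ≠ 0) (c : ℝ) :
    ∫ y, π y * (((π y)⁻¹ - (∫ t, π t ∂ν)⁻¹) * c) ∂ν = 0 := by
  rw [integral_congr_ae (mul_inv_sub_inv_mul_ae_eq hπ0 _ c), integral_mul_const,
    integral_sub (integrable_const 1) (hπ.mul_const _), integral_mul_const, mul_inv_cancel₀ hm,
    integral_const, probReal_univ, one_smul, sub_self, zero_mul]

end

theorem outcome_model_Dstar_mean_zero_general
    {Θ : Type*} [MeasurableSpace Θ] (ν : Measure Θ) [IsProbabilityMeasure ν]
    (πb S : Θ → ℝ)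
    (hπ : ∀ᵐ y ∂ν, πb y ∈ Set.Ioo (0:ℝ) 1)
    (hπmean : (∫ y, πb y ∂ν) ∈ Set.Ioo (0:ℝ) 1)
    (hπint : Integrable πb ν)
    (hπSint : Integrable (fun y => πb y * S y) ν)
    (Cs : ℝ) (Ds : Θ → ℝ)
    (hDs : Ds = fun y => πb y * (S y - (∫ t, πb t * S t ∂ν) / (∫ t, πb t ∂ν)
        + ((πb y)⁻¹ - (∫ t, πb t ∂ν)⁻¹) * Cs)) :
    ∫ y, Ds y ∂ν = 0 := by
  have hm : ∫ y, πb y ∂ν ≠ 0 := hπmean.1.ne'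
  have hπ0 : ∀ᵐ y ∂ν, πb y ≠ 0 := hπ.mono fun y hy => hy.1.ne'
  simp_rw [hDs, mul_add]
  rw [integral_add (integrable_mul_sub_const hπint hπSint _)
      (integrable_mul_inv_sub_inv_mul hπ0 hπint _ Cs),
    integral_mul_sub_weighted_mean hπint hπSint hm,
    integral_mul_inv_sub_inv_integral_mul hπ0 hπint hm Cs, add_zero]

/-- Mean-zero property of the efficient score component `D*_eff` in Theorem 1(c),
working conditionally on `X = x` (`ν` is the conditional distribution of `Y` given `x`,
`π̄(y) = 1/E[W|x,y] ∈ (0,1)`). With `C*(x) = E[π̄S|x]/(E[π̄|x] − 1)`, the function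
`D*(y) = π̄(y)·{S(y) − E[π̄S|x]/E[π̄|x] + (1/π̄(y) − 1/E[π̄|x])·C*(x)}`
satisfies `E[D* | x] = 0`. -/
theorem outcome_model_Dstar_mean_zero
    {Θ : Type*} [MeasurableSpace Θ] (ν : Measure Θ) [IsProbabilityMeasure ν]
    (πb S : Θ → ℝ)
    (hπ : ∀ᵐ y ∂ν, πb y ∈ Set.Ioo (0:ℝ) 1)
    (hπmean : (∫ y, πb y ∂ν) ∈ Set.Ioo (0:ℝ) 1)
    (hπint : Integrable πb ν)
    (hπSint : Integrable (fun y => πb y * S y) ν)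
    (Cs : ℝ) (Ds : Θ → ℝ)
    (hCs : Cs = (∫ y, πb y * S y ∂ν) / ((∫ y, πb y ∂ν) - 1))
    (hDs : Ds = fun y => πb y * (S y - (∫ t, πb t * S t ∂ν) / (∫ t, πb t ∂ν)
        + ((πb y)⁻¹ - (∫ t, πb t ∂ν)⁻¹) * Cs))
    (hDint : Integrable Ds ν) :
    ∫ y, Ds y ∂ν = 0 :=
  outcome_model_Dstar_mean_zero_general ν πb S hπ hπmean hπint hπSint Cs Ds hDs
end

section
/- In the linear regression / mean model setting, the projection of any h ∈ H onto Λ^{F} = orthogonal complement of Λ^{F,⊥} where Λ^{F,⊥} = {A(X)ε : A measurable, E[A(X)²ε²]<∞}, satisfies Π(h | Λ^{F,⊥}) = (E[hε | X]/V(X))·ε, where ε = Y − μ(X;θ), E[ε|X]=0 and V(X) = E[ε²|X] > 0 a.s. -/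
open MeasureTheory

theorem integral_mul_condExp_of_stronglyMeasurable_left {Ω : Type*} {m m0 : MeasurableSpace Ω}
    {μ : Measure Ω} (hm : m ≤ m0) [SigmaFinite (μ.trim hm)] {f g : Ω → ℝ}
    (hf : StronglyMeasurable[m] f) (hfg : Integrable (f * g) μ) (hg : Integrable g μ) :
    ∫ ω, f ω * (μ[g | m]) ω ∂μ = ∫ ω, f ω * g ω ∂μ :=
  (integral_congr_ae (condExp_mul_of_stronglyMeasurable_left hf hfg hg)).symm.trans
    (integral_condExp hm)

theorem projection_onto_Aeps_general
    {Ω : Type*} [m0 : MeasurableSpace Ω] (μ : Measure Ω) [IsProbabilityMeasure μ]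
    (m : MeasurableSpace Ω) (hm : m ≤ m0)
    (h ε : Ω → ℝ)
    (hh : MemLp h 2 μ) (hε : MemLp ε 2 μ)
    (hVpos : ∀ᵐ ω ∂μ, 0 < (μ[fun ω => ε ω ^ 2 | m]) ω) :
    ∀ A : Ω → ℝ, Measurable[m] A → MemLp (fun ω => A ω * ε ω) 2 μ →
      Integrable (fun ω =>
        (h ω - (μ[fun ω => h ω * ε ω | m]) ω / (μ[fun ω => ε ω ^ 2 | m]) ω * ε ω)
          * (A ω * ε ω)) μ →
      ∫ ω, (h ω - (μ[fun ω => h ω * ε ω | m]) ω / (μ[fun ω => ε ω ^ 2 | m]) ω * ε ω)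
          * (A ω * ε ω) ∂μ = 0 := by
  intro A hA hAε hInt
  set g := μ[fun ω => h ω * ε ω | m]
  set V := μ[fun ω => ε ω ^ 2 | m]
  set B : Ω → ℝ := fun ω => g ω / V ω * A ω
  have hB : StronglyMeasurable[m] B :=
    ((stronglyMeasurable_condExp.measurable.div stronglyMeasurable_condExp.measurable).mul
      hA).stronglyMeasurable
  have hhAε : Integrable (fun ω => h ω * (A ω * ε ω)) μ := hh.integrable_mul hAε
  have hBε2 : Integrable (fun ω => B ω * ε ω ^ 2) μ :=
    (hhAε.sub hInt).congr (ae_of_all _ fun ω => by simp only [Pi.sub_apply, B]; ring)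
  have hAhε : Integrable (A * fun ω => h ω * ε ω) μ :=
    hhAε.congr (ae_of_all _ fun ω => by simp only [Pi.mul_apply]; ring)
  -- Pulling the `m`-measurable factors out of `μ[· | m]`, both terms reduce to `∫ A · μ[hε | m]`.
  have inner_h_eq : ∫ ω, h ω * (A ω * ε ω) ∂μ = ∫ ω, A ω * g ω ∂μ := by
    rw [integral_mul_condExp_of_stronglyMeasurable_left hm hA.stronglyMeasurable hAhε
      (hh.integrable_mul hε)]
    exact integral_congr_ae (ae_of_all _ fun ω => by ring)
  have inner_proj_eq : ∫ ω, B ω * ε ω ^ 2 ∂μ = ∫ ω, A ω * g ω ∂μ := by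
    rw [← integral_mul_condExp_of_stronglyMeasurable_left hm hB hBε2 hε.integrable_sq]
    refine integral_congr_ae (hVpos.mono fun ω hω => ?_)
    simp only [B, V] at hω ⊢
    field_simp
  calc _ = ∫ ω, h ω * (A ω * ε ω) ∂μ - ∫ ω, B ω * ε ω ^ 2 ∂μ := by
        rw [← integral_sub hhAε hBε2]
        exact integral_congr_ae (ae_of_all _ fun ω => by simp only [B]; ring)
    _ = 0 := by rw [inner_h_eq, inner_proj_eq, sub_self]

/-- Projection onto `Λ^{F,⊥} = {A(X)·ε}` in the conditional-mean model: with
`ε = Y − μ(X;θ)`, `E[ε | X] = 0`, `V(X) = E[ε² | X] > 0` a.s., the residual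
`h − (E[hε | X]/V(X))·ε` is orthogonal to every `A(X)·ε` with `A` being
`σ(X)`-measurable and `A·ε` square-integrable; i.e.
`Π(h | Λ^{F,⊥}) = (E[hε | X]/V(X))·ε`. -/
theorem projection_onto_Aeps
    {Ω : Type*} [m0 : MeasurableSpace Ω] (μ : Measure Ω) [IsProbabilityMeasure μ]
    (m : MeasurableSpace Ω) (hm : m ≤ m0)
    (h ε : Ω → ℝ)
    (hh : MemLp h 2 μ) (hε : MemLp ε 2 μ)
    (hεcond : μ[ε | m] =ᵐ[μ] 0)
    (hVpos : ∀ᵐ ω ∂μ, 0 < (μ[fun ω => ε ω ^ 2 | m]) ω) :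
    ∀ A : Ω → ℝ, Measurable[m] A → MemLp (fun ω => A ω * ε ω) 2 μ →
      Integrable (fun ω =>
        (h ω - (μ[fun ω => h ω * ε ω | m]) ω / (μ[fun ω => ε ω ^ 2 | m]) ω * ε ω)
          * (A ω * ε ω)) μ →
      ∫ ω, (h ω - (μ[fun ω => h ω * ε ω | m]) ω / (μ[fun ω => ε ω ^ 2 | m]) ω * ε ω)
          * (A ω * ε ω) ∂μ = 0 :=
  projection_onto_Aeps_general (m0 := m0) μ m hm h ε hh hε hVpos
end

section
/- Under informative sampling with P(δ=1|X,Y,W) = W⁻¹ and E[W−1] > 0, the estimator θ̂ = N⁻¹ Σᵢ { δᵢWᵢYᵢ + (1−δᵢWᵢ)·c } with c = E[(W−1)Y]/E[W−1] is unbiased for θ = E[Y], and for any constant c' the variance of a single summand δWY + (1−δW)c' is minimized over c' at c' = c. -/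
/-!
Since `E[δ | X, Y, W] = W⁻¹`, inverse probability weighting gives `E[δ W h] = E[h]` for every
integrable `h` that is a function of `(X, Y, W)`. Integrability of `δ W h` comes from the same
identity for Lebesgue integrals, which holds because the measures with densities `δ` and `W⁻¹`
agree on the conditioning σ-algebra. Writing the summand as `δ W (Y - t) + t` and using `δ² = δ`,
its mean is `E[Y]` and its variance is `E[W Y²] - E[Y]² - 2t E[(W - 1) Y] + t² E[W - 1]`, a
quadratic in `t` minimised at `t = c`.
-/

open MeasureTheory

section InverseProbabilityWeighting

variable {Ω : Type*} {m m0 : MeasurableSpace Ω} {μ : Measure Ω}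

theorem lintegral_ofReal_mul_eq_of_condExp_eq (hm : m ≤ m0) [SigmaFinite (μ.trim hm)]
    {f g : Ω → ℝ} (hf : Integrable f μ) (hf0 : 0 ≤ᵐ[μ] f) (hfg : μ[f|m] =ᵐ[μ] g)
    {h : Ω → ENNReal} (hh : Measurable[m] h) :
    ∫⁻ ω, ENNReal.ofReal (f ω) * h ω ∂μ = ∫⁻ ω, ENNReal.ofReal (g ω) * h ω ∂μ := by
  have hg : Integrable g μ := integrable_condExp.congr hfg
  have hg0 : 0 ≤ᵐ[μ] g := by
    filter_upwards [condExp_nonneg (m := m) hf0, hfg] with ω h1 h2 using h2 ▸ h1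
  have htrim : (μ.withDensity fun ω => ENNReal.ofReal (f ω)).trim hm
      = (μ.withDensity fun ω => ENNReal.ofReal (g ω)).trim hm := by
    refine @Measure.ext _ m _ _ fun s hs => ?_
    rw [trim_measurableSet_eq hm hs, trim_measurableSet_eq hm hs, withDensity_apply _ (hm s hs),
      withDensity_apply _ (hm s hs),
      ← ofReal_integral_eq_lintegral_ofReal hf.integrableOn (ae_restrict_of_ae hf0),
      ← ofReal_integral_eq_lintegral_ofReal hg.integrableOn (ae_restrict_of_ae hg0),
      ← setIntegral_condExp hm hf hs, setIntegral_congr_ae (hm s hs) (hfg.mono fun ω h _ => h)]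
  have hh0 : Measurable h := hh.mono hm le_rfl
  calc ∫⁻ ω, ENNReal.ofReal (f ω) * h ω ∂μ
      = ∫⁻ ω, h ω ∂(μ.withDensity fun ω => ENNReal.ofReal (f ω)) :=
        (lintegral_withDensity_eq_lintegral_mul₀ hf.aemeasurable.ennreal_ofReal
          hh0.aemeasurable).symm
    _ = ∫⁻ ω, h ω ∂(μ.withDensity fun ω => ENNReal.ofReal (g ω)) := by
        rw [← lintegral_trim hm hh, htrim, lintegral_trim hm hh]
    _ = ∫⁻ ω, ENNReal.ofReal (g ω) * h ω ∂μ :=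
        lintegral_withDensity_eq_lintegral_mul₀ hg.aemeasurable.ennreal_ofReal hh0.aemeasurable

variable {δ W h : Ω → ℝ}

theorem integrable_mul_mul_of_condExp_eq_inv (hm : m ≤ m0) [SigmaFinite (μ.trim hm)]
    (hδ : Integrable δ μ) (hδ0 : ∀ ω, 0 ≤ δ ω) (hcond : μ[δ|m] =ᵐ[μ] fun ω => (W ω)⁻¹)
    (hWm : Measurable[m] W) (hW : ∀ᵐ ω ∂μ, 0 < W ω) (hhm : Measurable[m] h)
    (hh : Integrable h μ) :
    Integrable (fun ω => δ ω * W ω * h ω) μ := by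
  refine ⟨(hδ.aestronglyMeasurable.mul ((hWm.mul hhm).mono hm le_rfl).aestronglyMeasurable).congr
    (ae_of_all _ fun ω => (mul_assoc _ _ _).symm), ?_⟩
  have hW' : Measurable[m] fun ω => ENNReal.ofReal (W ω) * ‖h ω‖ₑ :=
    hWm.ennreal_ofReal.mul (measurable_enorm.comp hhm)
  calc ∫⁻ ω, ‖δ ω * W ω * h ω‖ₑ ∂μ
      = ∫⁻ ω, ENNReal.ofReal (δ ω) * (ENNReal.ofReal (W ω) * ‖h ω‖ₑ) ∂μ := by
        refine lintegral_congr_ae ?_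
        filter_upwards [hW] with ω hω
        rw [enorm_mul, enorm_mul, Real.enorm_of_nonneg (hδ0 ω), Real.enorm_of_nonneg hω.le,
          mul_assoc]
    _ = ∫⁻ ω, ENNReal.ofReal (W ω)⁻¹ * (ENNReal.ofReal (W ω) * ‖h ω‖ₑ) ∂μ :=
        lintegral_ofReal_mul_eq_of_condExp_eq hm hδ (ae_of_all _ hδ0) hcond hW'
    _ = ∫⁻ ω, ‖h ω‖ₑ ∂μ := by
        refine lintegral_congr_ae ?_
        filter_upwards [hW] with ω hω
        rw [← mul_assoc, ← ENNReal.ofReal_mul (inv_nonneg.2 hω.le), inv_mul_cancel₀ hω.ne',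
          ENNReal.ofReal_one, one_mul]
    _ < ⊤ := hh.2

theorem integral_mul_mul_of_condExp_eq_inv (hm : m ≤ m0) [SigmaFinite (μ.trim hm)]
    (hδ : Integrable δ μ) (hδ0 : ∀ ω, 0 ≤ δ ω) (hcond : μ[δ|m] =ᵐ[μ] fun ω => (W ω)⁻¹)
    (hWm : Measurable[m] W) (hW : ∀ᵐ ω ∂μ, 0 < W ω) (hhm : Measurable[m] h)
    (hh : Integrable h μ) :
    ∫ ω, δ ω * W ω * h ω ∂μ = ∫ ω, h ω ∂μ := by
  have hint := integrable_mul_mul_of_condExp_eq_inv hm hδ hδ0 hcond hWm hW hhm hh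
  have hpull : μ[(fun ω => W ω * h ω) * δ|m] =ᵐ[μ] (fun ω => W ω * h ω) * μ[δ|m] :=
    condExp_mul_of_stronglyMeasurable_left (hWm.mul hhm).stronglyMeasurable
      (hint.congr (ae_of_all _ fun ω => by simp only [Pi.mul_apply]; ring)) hδ
  calc ∫ ω, δ ω * W ω * h ω ∂μ = ∫ ω, μ[(fun ω => W ω * h ω) * δ|m] ω ∂μ := by
        rw [integral_condExp hm]; congr 1; ext ω; simp only [Pi.mul_apply]; ring
    _ = ∫ ω, h ω ∂μ := by
        refine integral_congr_ae ?_
        filter_upwards [hpull, hcond, hW] with ω h1 h2 h3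
        rw [h1, Pi.mul_apply, h2, mul_right_comm, mul_inv_cancel₀ h3.ne', one_mul]

end InverseProbabilityWeighting

theorem integral_inv_mul_sum_pi {Ω : Type*} [MeasurableSpace Ω] (μ : Measure Ω)
    [IsProbabilityMeasure μ] {f : Ω → ℝ} (hf : Integrable f μ) {N : ℕ} (hN : N ≠ 0) :
    ∫ x, (N : ℝ)⁻¹ * ∑ i, f (x i) ∂(Measure.pi fun _ : Fin N => μ) = ∫ ω, f ω ∂μ := by
  have heval (i : Fin N) := measurePreserving_eval (fun _ : Fin N => μ) i
  have hcomp (i : Fin N) : ∫ x, f (x i) ∂(Measure.pi fun _ : Fin N => μ) = ∫ ω, f ω ∂μ := by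
    have hmeas : AEStronglyMeasurable f ((Measure.pi fun _ : Fin N => μ).map (Function.eval i)) :=
      by rw [(heval i).map_eq]; exact hf.aestronglyMeasurable
    rw [← integral_map (heval i).measurable.aemeasurable hmeas, (heval i).map_eq]
  have hint (i : Fin N) : Integrable (fun x => f (x i)) (Measure.pi fun _ : Fin N => μ) :=
    (heval i).integrable_comp_of_integrable hf
  rw [integral_const_mul, integral_finsetSum Finset.univ fun i _ => hint i,
    Finset.sum_congr rfl fun i _ => hcomp i, Finset.sum_const, Finset.card_univ, Fintype.card_fin,
    nsmul_eq_mul, inv_mul_cancel_left₀ (Nat.cast_ne_zero.2 hN)]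

theorem integrable_of_one_le_of_integrable_mul_sq {Ω : Type*} [MeasurableSpace Ω] {μ : Measure Ω}
    [IsFiniteMeasure μ] {W Y : Ω → ℝ} (hY : AEStronglyMeasurable Y μ) (hW : ∀ᵐ ω ∂μ, 1 ≤ W ω)
    (hWY2 : Integrable (fun ω => W ω * Y ω ^ 2) μ) : Integrable Y μ := by
  refine ((memLp_two_iff_integrable_sq hY).2 (hWY2.mono' (hY.pow 2) ?_)).integrable one_le_two
  filter_upwards [hW] with ω hω
  rw [Real.norm_of_nonneg (sq_nonneg _)]
  exact le_mul_of_one_le_left (sq_nonneg _) hω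

section AugmentedSummand

variable {Ω : Type*} {m m0 : MeasurableSpace Ω} {μ : Measure Ω} [IsProbabilityMeasure μ]
  {δ W Y : Ω → ℝ}

theorem integrable_augmented_summand (hm : m ≤ m0) (hδ : Integrable δ μ) (hδ0 : ∀ ω, 0 ≤ δ ω)
    (hcond : μ[δ|m] =ᵐ[μ] fun ω => (W ω)⁻¹) (hWm : Measurable[m] W) (hW : ∀ᵐ ω ∂μ, 0 < W ω)
    (hYm : Measurable[m] Y) (hY : Integrable Y μ) (t : ℝ) :
    Integrable (fun ω => δ ω * W ω * Y ω + (1 - δ ω * W ω) * t) μ := by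
  have hint : Integrable (fun ω => δ ω * W ω * (Y ω - t)) μ :=
    integrable_mul_mul_of_condExp_eq_inv hm hδ hδ0 hcond hWm hW (hYm.sub measurable_const)
      (hY.sub (integrable_const t))
  exact (hint.add (integrable_const t)).congr
    (ae_of_all _ fun ω => by simp only [Pi.add_apply]; ring)

theorem integral_augmented_summand (hm : m ≤ m0) (hδ : Integrable δ μ) (hδ0 : ∀ ω, 0 ≤ δ ω)
    (hcond : μ[δ|m] =ᵐ[μ] fun ω => (W ω)⁻¹) (hWm : Measurable[m] W) (hW : ∀ᵐ ω ∂μ, 0 < W ω)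
    (hYm : Measurable[m] Y) (hY : Integrable Y μ) (t : ℝ) :
    ∫ ω, (δ ω * W ω * Y ω + (1 - δ ω * W ω) * t) ∂μ = ∫ ω, Y ω ∂μ := by
  have hYtm : Measurable[m] fun ω => Y ω - t := hYm.sub measurable_const
  have hYt : Integrable (fun ω => Y ω - t) μ := hY.sub (integrable_const t)
  have hint := integrable_mul_mul_of_condExp_eq_inv hm hδ hδ0 hcond hWm hW hYtm hYt
  have hS : (fun ω => δ ω * W ω * Y ω + (1 - δ ω * W ω) * t)
      = fun ω => δ ω * W ω * (Y ω - t) + t := by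
    ext ω; ring
  rw [hS, integral_add hint (integrable_const t),
    integral_mul_mul_of_condExp_eq_inv hm hδ hδ0 hcond hWm hW hYtm hYt,
    integral_sub hY (integrable_const t)]
  simp

theorem integral_augmented_summand_sq (hm : m ≤ m0) (hδ : Integrable δ μ)
    (hδ01 : ∀ ω, δ ω = 0 ∨ δ ω = 1) (hcond : μ[δ|m] =ᵐ[μ] fun ω => (W ω)⁻¹)
    (hWm : Measurable[m] W) (hW : ∀ᵐ ω ∂μ, 0 < W ω)
    (hYm : Measurable[m] Y) (hY : Integrable Y μ) (t : ℝ)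
    (hWYt : Integrable (fun ω => W ω * (Y ω - t) ^ 2) μ) :
    ∫ ω, (δ ω * W ω * Y ω + (1 - δ ω * W ω) * t) ^ 2 ∂μ
      = ∫ ω, W ω * (Y ω - t) ^ 2 ∂μ + 2 * t * (∫ ω, Y ω ∂μ - t) + t ^ 2 := by
  have hδ0 (ω : Ω) : 0 ≤ δ ω := by rcases hδ01 ω with h | h <;> simp [h]
  have hYtm : Measurable[m] fun ω => Y ω - t := hYm.sub measurable_const
  have hYt : Integrable (fun ω => Y ω - t) μ := hY.sub (integrable_const t)
  have hWYtm : Measurable[m] fun ω => W ω * (Y ω - t) ^ 2 := hWm.mul (hYtm.pow_const 2)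
  have h1 := integrable_mul_mul_of_condExp_eq_inv hm hδ hδ0 hcond hWm hW hWYtm hWYt
  have h2 := integrable_mul_mul_of_condExp_eq_inv hm hδ hδ0 hcond hWm hW hYtm hYt
  have hS : (fun ω => (δ ω * W ω * Y ω + (1 - δ ω * W ω) * t) ^ 2)
      = fun ω =>
        δ ω * W ω * (W ω * (Y ω - t) ^ 2) + 2 * t * (δ ω * W ω * (Y ω - t)) + t ^ 2 := by
    ext ω; rcases hδ01 ω with h | h <;> rw [h] <;> ring
  have h12 : Integrable
      (fun ω => δ ω * W ω * (W ω * (Y ω - t) ^ 2) + 2 * t * (δ ω * W ω * (Y ω - t))) μ :=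
    h1.add (h2.const_mul _)
  rw [hS, integral_add h12 (integrable_const _), integral_add h1 (h2.const_mul _),
    integral_const_mul, integral_mul_mul_of_condExp_eq_inv hm hδ hδ0 hcond hWm hW hWYtm hWYt,
    integral_mul_mul_of_condExp_eq_inv hm hδ hδ0 hcond hWm hW hYtm hYt,
    integral_sub hY (integrable_const t)]
  simp

theorem variance_augmented_summand (hm : m ≤ m0) (hδ : Integrable δ μ)
    (hδ01 : ∀ ω, δ ω = 0 ∨ δ ω = 1) (hcond : μ[δ|m] =ᵐ[μ] fun ω => (W ω)⁻¹)
    (hWm : Measurable[m] W) (hW : ∀ᵐ ω ∂μ, 0 < W ω)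
    (hYm : Measurable[m] Y) (hY : Integrable Y μ) (hWY2 : Integrable (fun ω => W ω * Y ω ^ 2) μ)
    (hWY : Integrable (fun ω => W ω * Y ω) μ) (hWint : Integrable W μ) (t : ℝ) :
    ∫ ω, (δ ω * W ω * Y ω + (1 - δ ω * W ω) * t) ^ 2 ∂μ
        - (∫ ω, (δ ω * W ω * Y ω + (1 - δ ω * W ω) * t) ∂μ) ^ 2
      = ∫ ω, W ω * Y ω ^ 2 ∂μ - (∫ ω, Y ω ∂μ) ^ 2 - 2 * t * ∫ ω, (W ω - 1) * Y ω ∂μ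
        + t ^ 2 * ∫ ω, (W ω - 1) ∂μ := by
  have hδ0 (ω : Ω) : 0 ≤ δ ω := by rcases hδ01 ω with h | h <;> simp [h]
  have hexp : (fun ω => W ω * (Y ω - t) ^ 2)
      = fun ω => W ω * Y ω ^ 2 - 2 * t * (W ω * Y ω) + t ^ 2 * W ω := by
    ext ω; ring
  have hWY2t : Integrable (fun ω => W ω * Y ω ^ 2 - 2 * t * (W ω * Y ω)) μ :=
    hWY2.sub (hWY.const_mul _)
  have hWYt : Integrable (fun ω => W ω * (Y ω - t) ^ 2) μ := hexp ▸ hWY2t.add (hWint.const_mul _)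
  have hWY1 : ∫ ω, (W ω - 1) * Y ω ∂μ = ∫ ω, W ω * Y ω ∂μ - ∫ ω, Y ω ∂μ := by
    simp_rw [sub_mul, one_mul]; exact integral_sub hWY hY
  have hW1 : ∫ ω, (W ω - 1) ∂μ = ∫ ω, W ω ∂μ - 1 := by
    rw [integral_sub hWint (integrable_const 1)]; simp
  rw [integral_augmented_summand_sq hm hδ hδ01 hcond hWm hW hYm hY t hWYt,
    integral_augmented_summand hm hδ hδ0 hcond hWm hW hYm hY t, hexp,
    integral_add hWY2t (hWint.const_mul _), integral_sub hWY2 (hWY.const_mul _),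
    integral_const_mul, integral_const_mul, hWY1, hW1]
  ring

end AugmentedSummand

/-- Optimal augmented estimator for the mean: with `P(δ=1|X,Y,W) = W⁻¹`, `W > 1` a.s.,
`E[W−1] > 0` and `c = E[(W−1)Y]/E[W−1]`, the estimator
`θ̂ = N⁻¹ Σᵢ {δᵢWᵢYᵢ + (1−δᵢWᵢ)c}` over i.i.d. copies is unbiased for `θ = E[Y]`, and
for any constant `c'` the variance of a single summand `δWY + (1−δW)c'` is minimized
at `c' = c`. -/
theorem optimal_mean_estimator
    {Ω : Type*} [m0 : MeasurableSpace Ω] (μ : Measure Ω) [IsProbabilityMeasure μ]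
    (X Y W δ : Ω → ℝ)
    (hX : Measurable X) (hY : Measurable Y) (hWm : Measurable W) (hδm : Measurable δ)
    (hδ01 : ∀ ω, δ ω = 0 ∨ δ ω = 1)
    (hW : ∀ᵐ ω ∂μ, 1 < W ω)
    (hcond : μ[δ | MeasurableSpace.comap (fun ω => (X ω, Y ω, W ω)) inferInstance]
      =ᵐ[μ] fun ω => (W ω)⁻¹)
    (hWY2 : Integrable (fun ω => W ω * Y ω ^ 2) μ)
    (hWY : Integrable (fun ω => W ω * Y ω) μ)
    (hWint : Integrable W μ)
    (hEW : 0 < ∫ ω, (W ω - 1) ∂μ)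
    (c : ℝ) (hc : c = (∫ ω, (W ω - 1) * Y ω ∂μ) / (∫ ω, (W ω - 1) ∂μ))
    (N : ℕ) (hN : 0 < N) :
    (∫ x, ((N : ℝ)⁻¹ * ∑ i, (δ (x i) * W (x i) * Y (x i) + (1 - δ (x i) * W (x i)) * c))
        ∂(Measure.pi fun _ : Fin N => μ)
      = ∫ ω, Y ω ∂μ)
    ∧ ∀ c' : ℝ,
        (∫ ω, (δ ω * W ω * Y ω + (1 - δ ω * W ω) * c) ^ 2 ∂μ)
            - (∫ ω, (δ ω * W ω * Y ω + (1 - δ ω * W ω) * c) ∂μ) ^ 2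
          ≤ (∫ ω, (δ ω * W ω * Y ω + (1 - δ ω * W ω) * c') ^ 2 ∂μ)
            - (∫ ω, (δ ω * W ω * Y ω + (1 - δ ω * W ω) * c') ∂μ) ^ 2 := by
  have hG : MeasurableSpace.comap (fun ω => (X ω, Y ω, W ω)) inferInstance ≤ m0 :=
    (hX.prodMk (hY.prodMk hWm)).comap_le
  have hYG : Measurable[MeasurableSpace.comap (fun ω => (X ω, Y ω, W ω)) inferInstance] Y :=
    measurable_fst.comp (measurable_snd.comp (comap_measurable _))
  have hWG : Measurable[MeasurableSpace.comap (fun ω => (X ω, Y ω, W ω)) inferInstance] W :=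
    measurable_snd.comp (measurable_snd.comp (comap_measurable _))
  have hδ0 (ω : Ω) : 0 ≤ δ ω := by rcases hδ01 ω with h | h <;> simp [h]
  have hδ : Integrable δ μ := (integrable_const (1 : ℝ)).mono' hδm.aestronglyMeasurable
    (ae_of_all _ fun ω => by rcases hδ01 ω with h | h <;> simp [h])
  have hW0 : ∀ᵐ ω ∂μ, 0 < W ω := hW.mono fun _ h => one_pos.trans h
  have hYint : Integrable Y μ :=
    integrable_of_one_le_of_integrable_mul_sq hY.aestronglyMeasurable (hW.mono fun _ h => h.le)
      hWY2
  refine ⟨?_, fun c' => ?_⟩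
  · rw [integral_inv_mul_sum_pi μ
      (integrable_augmented_summand hG hδ hδ0 hcond hWG hW0 hYG hYint c) hN.ne']
    exact integral_augmented_summand hG hδ hδ0 hcond hWG hW0 hYG hYint c
  · rw [variance_augmented_summand hG hδ hδ01 hcond hWG hW0 hYG hYint hWY2 hWY hWint,
      variance_augmented_summand hG hδ hδ01 hcond hWG hW0 hYG hYint hWY2 hWY hWint]
    have hcEW : ∫ ω, (W ω - 1) * Y ω ∂μ = c * ∫ ω, (W ω - 1) ∂μ := by
      rw [hc, div_mul_cancel₀ _ hEW.ne']
    rw [hcEW]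
    nlinarith [mul_nonneg hEW.le (sq_nonneg (c' - c))]
end
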